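/- arXiv:1708.03218 — 5 statements merged into one kernel-verified Lean document; each statement's English description precedes it below -/
import Mathlib

section
/- Let K be a real n×n matrix, let Q be a real n×m matrix (m ≤ n) with orthonormal columns (QᵀQ = I_m), and let r ≤ m be a positive integer. If T* is a real m×n matrix with rank(T*) ≤ r that minimizes ‖QᵀK − T‖_F over all real m×n matrices T with rank(T) ≤ r, then T* also minimizes ‖K − QT‖_F over all real m×n matrices T with rank(T) ≤ r; that is, for every real m×n matrix T with rank(T) ≤ r one has ‖K − QT*‖_F ≤ ‖K − QT‖_F. -/
open Matrix

/-- Frobenius norm of a real matrix: ‖A‖_F = sqrt(trace(Aᵀ A)). -/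
noncomputable def frobNorm {α β : Type*} [Fintype α] [Fintype β] (A : Matrix α β ℝ) : ℝ :=
  Real.sqrt (Matrix.trace (Aᵀ * A))

/-!
Orthonormality of the columns of `Q` gives the Pythagorean splitting
`‖K - Q T‖_F² = (‖K‖_F² - ‖Qᵀ K‖_F²) + ‖Qᵀ K - T‖_F²`, whose first summand does not depend on `T`.
Hence `T ↦ ‖K - Q T‖_F` and `T ↦ ‖Qᵀ K - T‖_F` have the same minimizers over any set of matrices.
-/

section Pythagoras

variable {ι κ ν R : Type*} [Fintype ι] [Fintype κ] [DecidableEq κ] [Fintype ν] [CommRing R]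

theorem trace_transpose_mul_self_sub_mul_of_transpose_mul_self_eq_one
    {Q : Matrix ι κ R} (hQ : Qᵀ * Q = 1) (K : Matrix ι ν R) (T : Matrix κ ν R) :
    trace ((K - Q * T)ᵀ * (K - Q * T)) =
      (trace (Kᵀ * K) - trace ((Qᵀ * K)ᵀ * (Qᵀ * K))) + trace ((Qᵀ * K - T)ᵀ * (Qᵀ * K - T)) := by
  have hQT : Qᵀ * (Q * T) = T := by rw [← Matrix.mul_assoc, hQ, Matrix.one_mul]
  have hcross : trace (Tᵀ * (Qᵀ * K)) = trace (Kᵀ * (Q * T)) := by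
    rw [← trace_transpose]
    simp only [transpose_mul, transpose_transpose, Matrix.mul_assoc]
  simp only [transpose_sub, transpose_mul, transpose_transpose, Matrix.sub_mul, Matrix.mul_sub,
    trace_sub, Matrix.mul_assoc, hQT, hcross]
  ring

end Pythagoras

section FrobNorm

variable {α β : Type*} [Fintype α] [Fintype β]

theorem frobNorm_nonneg (A : Matrix α β ℝ) : 0 ≤ frobNorm A :=
  Real.sqrt_nonneg _

theorem frobNorm_sq (A : Matrix α β ℝ) : frobNorm A ^ 2 = trace (Aᵀ * A) := by
  refine Real.sq_sqrt ?_
  simpa only [conjTranspose_eq_transpose_of_trivial] using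
    (posSemidef_conjTranspose_mul_self A).trace_nonneg

theorem frobNorm_sub_mul_sq_of_transpose_mul_self_eq_one {γ : Type*} [Fintype γ] [DecidableEq β]
    {Q : Matrix α β ℝ} (hQ : Qᵀ * Q = 1) (K : Matrix α γ ℝ) (T : Matrix β γ ℝ) :
    frobNorm (K - Q * T) ^ 2 =
      (frobNorm K ^ 2 - frobNorm (Qᵀ * K) ^ 2) + frobNorm (Qᵀ * K - T) ^ 2 := by
  simp only [frobNorm_sq, trace_transpose_mul_self_sub_mul_of_transpose_mul_self_eq_one hQ]

end FrobNorm

theorem stmt_0_general {n m r : ℕ}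
    (K : Matrix (Fin n) (Fin n) ℝ) (Q : Matrix (Fin n) (Fin m) ℝ)
    (hQ : Qᵀ * Q = 1)
    (Tstar : Matrix (Fin m) (Fin n) ℝ)
    (hmin : ∀ T : Matrix (Fin m) (Fin n) ℝ, T.rank ≤ r →
      frobNorm (Qᵀ * K - Tstar) ≤ frobNorm (Qᵀ * K - T)) :
    ∀ T : Matrix (Fin m) (Fin n) ℝ, T.rank ≤ r →
      frobNorm (K - Q * Tstar) ≤ frobNorm (K - Q * T) := by
  intro T hT
  have hsq : frobNorm (Qᵀ * K - Tstar) ^ 2 ≤ frobNorm (Qᵀ * K - T) ^ 2 :=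
    pow_le_pow_left₀ (frobNorm_nonneg _) (hmin T hT) 2
  rw [← pow_le_pow_iff_left₀ (frobNorm_nonneg _) (frobNorm_nonneg _) two_ne_zero,
    frobNorm_sub_mul_sq_of_transpose_mul_self_eq_one hQ,
    frobNorm_sub_mul_sq_of_transpose_mul_self_eq_one hQ]
  linarith

theorem stmt_0 {n m r : ℕ} (hmn : m ≤ n) (hr : 0 < r) (hrm : r ≤ m)
    (K : Matrix (Fin n) (Fin n) ℝ) (Q : Matrix (Fin n) (Fin m) ℝ)
    (hQ : Qᵀ * Q = 1)
    (Tstar : Matrix (Fin m) (Fin n) ℝ) (hTstar : Tstar.rank ≤ r)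
    (hmin : ∀ T : Matrix (Fin m) (Fin n) ℝ, T.rank ≤ r →
      frobNorm (Qᵀ * K - Tstar) ≤ frobNorm (Qᵀ * K - T)) :
    ∀ T : Matrix (Fin m) (Fin n) ℝ, T.rank ≤ r →
      frobNorm (K - Q * Tstar) ≤ frobNorm (K - Q * T) :=
  stmt_0_general K Q hQ Tstar hmin
end

section
/- Let C be a real n×m matrix (m ≤ n), let W be a real m×m symmetric positive definite matrix, and let r ≤ m be a positive integer. Let C = QR be a thin QR decomposition, where Q is n×m with orthonormal columns (QᵀQ = I_m) and R is m×m upper triangular, and let RW⁻¹Rᵀ = V′Σ′V′ᵀ be a spectral decomposition with V′ an m×m orthogonal matrix and Σ′ an m×m diagonal matrix whose diagonal entries are nonnegative and nonincreasing. Write V′_r for the first r columns of V′ and Σ′_r for the leading r×r block of Σ′. Then: (i) QV′ has orthonormal columns; (ii) CW⁻¹Cᵀ = (QV′)Σ′(QV′)ᵀ; and (iii) for every real n×n matrix G′ with rank(G′) ≤ r, ‖CW⁻¹Cᵀ − (QV′_r)Σ′_r(QV′_r)ᵀ‖_F ≤ ‖CW⁻¹Cᵀ − G′‖_F, i.e.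 (QV′_r)Σ′_r(QV′_r)ᵀ is a best rank-r approximation of CW⁻¹Cᵀ in the Frobenius norm. -/
open Matrix

/-! Parts (i) and (ii) are algebra: `U = Q V'` has orthonormal columns and
`C W⁻¹ Cᵀ = Q (R W⁻¹ Rᵀ) Qᵀ = U diag(d) Uᵀ`. Part (iii) is the Eckart–Young theorem for
`A = U diag(d) Uᵀ`, whose rank-`r` truncation leaves the error `∑_{i ≥ r} dᵢ²`. If `rank G ≤ r`,
let `P = X Xᵀ` (with `Xᵀ X = 1`) be the orthogonal projection onto the column space of `G`. Then
`(1 - P) G = 0`, so `‖A - G‖² ≥ ‖(1 - P) (A - G)‖² = ‖(1 - P) A‖² = ∑ dᵢ² bᵢ` with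
`bᵢ = ‖(1 - P) uᵢ‖² ∈ [0, 1]` and `∑ (1 - bᵢ) = ‖Uᵀ X‖² ≤ ‖X‖² = rank G ≤ r`. Under these
constraints `∑ dᵢ² bᵢ` is smallest when the weight sits on the smallest `dᵢ²`, which gives
`∑_{i ≥ r} dᵢ²`. -/

open Finset

/-- The bathtub principle: the terms `(f i - t) * (b i - 1_T i)` are all nonnegative. -/
theorem sum_le_sum_mul_of_sublevel {ι : Type*} [Fintype ι] [DecidableEq ι] (T : Finset ι)
    {f b : ι → ℝ} {t : ℝ} (ht : 0 ≤ t) (hfT : ∀ i ∈ T, f i ≤ t) (hfTc : ∀ i ∉ T, t ≤ f i)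
    (hb0 : ∀ i, 0 ≤ b i) (hb1 : ∀ i, b i ≤ 1) (hb : #T ≤ ∑ i, b i) :
    ∑ i ∈ T, f i ≤ ∑ i, f i * b i := by
  have key : ∑ i, f i * b i - ∑ i ∈ T, f i =
      ∑ i, (f i - t) * (b i - if i ∈ T then 1 else 0) + t * (∑ i, b i - #T) := by
    simp only [mul_sub, sub_mul, sum_sub_distrib, mul_ite, mul_one, mul_zero, sum_ite_mem,
      univ_inter, mul_sum, sum_const, nsmul_eq_mul]
    ring
  have hterm : ∀ i, 0 ≤ (f i - t) * (b i - if i ∈ T then 1 else 0) := fun i => by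
    split_ifs with hi
    · exact mul_nonneg_of_nonpos_of_nonpos (by linarith [hfT i hi]) (by linarith [hb1 i])
    · simpa using mul_nonneg (sub_nonneg.mpr (hfTc i hi)) (hb0 i)
  have := sum_nonneg fun i (_ : i ∈ univ) => hterm i
  nlinarith [mul_nonneg ht (sub_nonneg.mpr hb)]

theorem sum_tail_le_sum_mul_of_antitone {m r : ℕ} (hrm : r ≤ m) {f b : Fin m → ℝ}
    (hf0 : ∀ i, 0 ≤ f i) (hf : Antitone f) (hb0 : ∀ i, 0 ≤ b i) (hb1 : ∀ i, b i ≤ 1)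
    (hb : ∑ i, (1 - b i) ≤ r) :
    ∑ i ∈ univ.filter (fun i : Fin m => r ≤ (i : ℕ)), f i ≤ ∑ i, f i * b i := by
  have hcard : (#{i : Fin m | r ≤ (i : ℕ)} : ℝ) ≤ ∑ i, b i := by
    have h := card_filter_add_card_filter_not (s := (univ : Finset (Fin m)))
      (fun i : Fin m => (i : ℕ) < r)
    simp only [Fin.card_filter_val_lt, not_lt, card_univ, Fintype.card_fin] at h
    rw [show #{i : Fin m | r ≤ (i : ℕ)} = m - r by omega, Nat.cast_sub hrm]
    simp only [sum_sub_distrib, sum_const, card_univ, Fintype.card_fin, nsmul_eq_mul,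
      mul_one] at hb
    linarith
  rcases hrm.lt_or_eq with hr | rfl
  · refine sum_le_sum_mul_of_sublevel _ (hf0 ⟨r, hr⟩) (fun i hi => hf ?_) (fun i hi => hf ?_)
      hb0 hb1 hcard
    · simpa [Fin.le_def] using hi
    · simpa [Fin.le_def] using (not_le.mp (by simpa using hi)).le
  · refine sum_le_sum_mul_of_sublevel _ le_rfl (fun i hi => ?_) (fun i _ => hf0 i) hb0 hb1 hcard
    exact absurd i.isLt (not_lt.mpr (by simpa using hi))

namespace Matrix

variable {ι κ μ : Type*}

theorem transpose_mul_self_mul_eq_one {R : Type*} [CommSemiring R] [Fintype ι] [Fintype κ]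
    [DecidableEq κ] [DecidableEq μ] {Q : Matrix ι κ R} {V : Matrix κ μ R} (hQ : Qᵀ * Q = 1)
    (hV : Vᵀ * V = 1) : (Q * V)ᵀ * (Q * V) = 1 := by
  rw [transpose_mul, Matrix.mul_assoc, ← Matrix.mul_assoc Qᵀ, hQ, Matrix.one_mul, hV]

theorem diag_transpose_mul_self_nonneg [Fintype ι] (A : Matrix ι κ ℝ) (j : κ) :
    0 ≤ (Aᵀ * A) j j :=
  sum_nonneg fun _ _ => mul_self_nonneg _

theorem isSymm_mul_transpose {R : Type*} [CommSemiring R] [Fintype κ] (X : Matrix ι κ R) :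
    (X * Xᵀ).IsSymm := by
  simp [IsSymm, transpose_mul]

theorem isIdempotentElem_mul_transpose {R : Type*} [CommSemiring R] [Fintype ι] [Fintype κ]
    [DecidableEq κ] {X : Matrix ι κ R} (hX : Xᵀ * X = 1) : IsIdempotentElem (X * Xᵀ) := by
  rw [IsIdempotentElem, Matrix.mul_assoc, ← Matrix.mul_assoc Xᵀ, hX, Matrix.one_mul]

theorem IsSymm.transpose_mul_mul_self {R : Type*} [CommSemiring R] [Fintype ι]
    {E : Matrix ι ι R} (hEs : E.IsSymm) (hE : IsIdempotentElem E) (M : Matrix ι κ R) :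
    (E * M)ᵀ * (E * M) = Mᵀ * E * M := by
  rw [transpose_mul, hEs.eq, Matrix.mul_assoc, ← Matrix.mul_assoc E, hE.eq, Matrix.mul_assoc]

theorem IsSymm.diag_transpose_mul_self_mul_le [Fintype ι] [DecidableEq ι] {E : Matrix ι ι ℝ}
    (hEs : E.IsSymm) (hE : IsIdempotentElem E) (M : Matrix ι κ ℝ) (j : κ) :
    ((E * M)ᵀ * (E * M)) j j ≤ (Mᵀ * M) j j := by
  have hsplit : Mᵀ * M = (E * M)ᵀ * (E * M) + ((1 - E) * M)ᵀ * ((1 - E) * M) := by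
    rw [hEs.transpose_mul_mul_self hE, (isSymm_one.sub hEs).transpose_mul_mul_self hE.one_sub,
      Matrix.mul_sub, Matrix.sub_mul, Matrix.mul_one]
    abel
  rw [hsplit, add_apply]
  linarith [diag_transpose_mul_self_nonneg ((1 - E) * M) j]

theorem IsSymm.trace_transpose_mul_self_mul_le [Fintype ι] [DecidableEq ι] [Fintype κ]
    {E : Matrix ι ι ℝ} (hEs : E.IsSymm) (hE : IsIdempotentElem E) (M : Matrix ι κ ℝ) :
    trace ((E * M)ᵀ * (E * M)) ≤ trace (Mᵀ * M) :=
  sum_le_sum fun j _ => hEs.diag_transpose_mul_self_mul_le hE M j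

theorem exists_orthonormal_cols_mul_transpose_mul_eq [Fintype ι] [Fintype κ] [DecidableEq κ]
    (G : Matrix ι κ ℝ) : ∃ X : Matrix ι (Fin G.rank) ℝ, Xᵀ * X = 1 ∧ X * Xᵀ * G = G := by
  set S := LinearMap.range (toLpLin 2 2 G)
  have hS : Module.finrank ℝ S = G.rank :=
    (rank_eq_finrank_range_toLin G (PiLp.basisFun 2 ℝ ι) (PiLp.basisFun 2 ℝ κ)).symm
  set b := (stdOrthonormalBasis ℝ S).reindex (finCongr hS)
  have hinner (k : Fin G.rank) (v : EuclideanSpace ℝ ι) :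
      inner ℝ (b k : EuclideanSpace ℝ ι) v = ∑ i, (b k : EuclideanSpace ℝ ι) i * v i := by
    simp [PiLp.inner_apply, mul_comm]
  refine ⟨of fun i k => (b k : EuclideanSpace ℝ ι) i, ?_, ?_⟩
  · ext k l
    have := orthonormal_iff_ite.mp b.orthonormal k l
    rw [Submodule.coe_inner, hinner] at this
    simpa [mul_apply, one_apply] using this
  · ext i j
    have hcol : WithLp.toLp 2 (G.col j) ∈ S := ⟨WithLp.toLp 2 (Pi.single j 1), by ext; simp⟩
    have := congrArg (fun v : S => (v : EuclideanSpace ℝ ι) i) (b.sum_repr' ⟨_, hcol⟩)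
    simp [Submodule.coe_inner, hinner, sum_mul] at this
    simp only [mul_apply, transpose_apply, of_apply, sum_mul]
    rw [sum_comm, ← this]
    exact sum_congr rfl fun _ _ => sum_congr rfl fun _ _ => by ring

theorem trace_mul_diagonal_mul_transpose_mul [Fintype ι] [Fintype κ] [DecidableEq κ]
    {U : Matrix ι κ ℝ} (hU : Uᵀ * U = 1) (d : κ → ℝ) (M : Matrix ι ι ℝ) :
    trace (U * diagonal d * Uᵀ * M * (U * diagonal d * Uᵀ)) =
      ∑ k, d k ^ 2 * (Uᵀ * M * U) k k := by
  calc trace (U * diagonal d * Uᵀ * M * (U * diagonal d * Uᵀ))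
      = trace (diagonal d * (Uᵀ * M * U) * diagonal d * (Uᵀ * U)) := by
        simp only [Matrix.mul_assoc]; rw [trace_mul_comm U]; simp only [Matrix.mul_assoc]
    _ = ∑ k, d k ^ 2 * (Uᵀ * M * U) k k := by
        simp only [hU, Matrix.mul_one, trace, diag, diagonal_mul, mul_diagonal]
        exact sum_congr rfl fun k _ => by ring

theorem sum_tail_sq_le_trace_of_rank_le [Fintype ι] [DecidableEq ι] {m r : ℕ} (hrm : r ≤ m)
    {U : Matrix ι (Fin m) ℝ} (hU : Uᵀ * U = 1) {d : Fin m → ℝ} (hd : ∀ i, 0 ≤ d i)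
    (hmono : Antitone d) {G : Matrix ι ι ℝ} (hG : G.rank ≤ r) :
    ∑ i ∈ univ.filter (fun i : Fin m => r ≤ (i : ℕ)), d i ^ 2 ≤
      trace ((U * diagonal d * Uᵀ - G)ᵀ * (U * diagonal d * Uᵀ - G)) := by
  obtain ⟨X, hX, hXG⟩ := exists_orthonormal_cols_mul_transpose_mul_eq G
  set A := U * diagonal d * Uᵀ
  set E := 1 - X * Xᵀ
  have hEs : E.IsSymm := isSymm_one.sub (isSymm_mul_transpose X)
  have hE : IsIdempotentElem E := (isIdempotentElem_mul_transpose hX).one_sub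
  have hAs : A.IsSymm := by simp [A, IsSymm, transpose_mul, Matrix.mul_assoc]
  have hEG : E * (A - G) = E * A := by simp [E, Matrix.mul_sub, Matrix.sub_mul, hXG]
  set b : Fin m → ℝ := fun k => (Uᵀ * E * U) k k
  have hbE : ∀ k, b k = ((E * U)ᵀ * (E * U)) k k := fun k => by
    rw [hEs.transpose_mul_mul_self hE]
  have hb0 : ∀ k, 0 ≤ b k := fun k => hbE k ▸ diag_transpose_mul_self_nonneg _ k
  have hb1 : ∀ k, b k ≤ 1 := fun k => by
    have := hEs.diag_transpose_mul_self_mul_le hE U k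
    rwa [hU, one_apply_eq, ← hbE] at this
  have hb : ∑ k, (1 - b k) ≤ r := by
    have hUs := isSymm_mul_transpose U
    have hU' := isIdempotentElem_mul_transpose hU
    have hPU : ∑ k, (1 - b k) = trace ((U * Uᵀ * X)ᵀ * (U * Uᵀ * X)) := by
      have hbP : ∀ k, 1 - b k = (Uᵀ * X * (Xᵀ * U)) k k := fun k => by
        simp [b, E, Matrix.mul_sub, Matrix.sub_mul, hU, Matrix.mul_assoc]
      rw [sum_congr rfl fun k _ => hbP k, hUs.transpose_mul_mul_self hU']
      exact (trace_mul_comm _ _).trans (by simp only [Matrix.mul_assoc])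
    have hX' := hUs.trace_transpose_mul_self_mul_le hU' X
    rw [hX, trace_one, Fintype.card_fin] at hX'
    exact hPU ▸ hX'.trans (by exact_mod_cast hG)
  calc ∑ i ∈ univ.filter (fun i : Fin m => r ≤ (i : ℕ)), d i ^ 2
      ≤ ∑ k, d k ^ 2 * b k :=
        sum_tail_le_sum_mul_of_antitone hrm (fun i => sq_nonneg _)
          (fun i j hij => pow_le_pow_left₀ (hd j) (hmono hij) 2) hb0 hb1 hb
    _ = trace ((E * A)ᵀ * (E * A)) := by
        rw [hEs.transpose_mul_mul_self hE, hAs.eq, trace_mul_diagonal_mul_transpose_mul hU]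
    _ = trace ((E * (A - G))ᵀ * (E * (A - G))) := by rw [hEG]
    _ ≤ trace ((A - G)ᵀ * (A - G)) := hEs.trace_transpose_mul_self_mul_le hE _

theorem submatrix_castLE_mul_diagonal_mul_transpose {R : Type*} [CommSemiring R] {m r : ℕ}
    (hrm : r ≤ m) (U : Matrix ι (Fin m) R) (d : Fin m → R) :
    U.submatrix id (Fin.castLE hrm) * diagonal (fun i => d (Fin.castLE hrm i)) *
        (U.submatrix id (Fin.castLE hrm))ᵀ =
      U * diagonal (fun i : Fin m => if (i : ℕ) < r then d i else 0) * Uᵀ := by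
  ext i j
  rw [mul_apply, mul_apply]
  simp only [mul_diagonal, transpose_apply, submatrix_apply, id_eq]
  refine Fintype.sum_of_injective (Fin.castLE hrm) (Fin.castLE_injective hrm) _ _
    (fun k hk => ?_) (fun k => by simp)
  have hkr : ¬ (k : ℕ) < r := by simpa [Fin.range_castLE] using hk
  simp [hkr]

theorem trace_transpose_mul_self_sub_truncation [Fintype ι] [DecidableEq ι] {m r : ℕ}
    {U : Matrix ι (Fin m) ℝ}
    (hU : Uᵀ * U = 1) (d : Fin m → ℝ) :
    let Ar := U * diagonal (fun i : Fin m => if (i : ℕ) < r then d i else 0) * Uᵀ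
    trace ((U * diagonal d * Uᵀ - Ar)ᵀ * (U * diagonal d * Uᵀ - Ar)) =
      ∑ i ∈ univ.filter (fun i : Fin m => r ≤ (i : ℕ)), d i ^ 2 := by
  intro Ar
  set f : Fin m → ℝ := fun i => if (i : ℕ) < r then 0 else d i
  have hdiff : U * diagonal d * Uᵀ - Ar = U * diagonal f * Uᵀ := by
    rw [← Matrix.sub_mul, ← Matrix.mul_sub, diagonal_sub]
    congr 3; ext i; split_ifs <;> simp [f, *]
  have hsymm : (U * diagonal f * Uᵀ)ᵀ = U * diagonal f * Uᵀ := by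
    simp [transpose_mul, Matrix.mul_assoc]
  have htr := trace_mul_diagonal_mul_transpose_mul hU f 1
  rw [Matrix.mul_one, Matrix.mul_one, hU] at htr
  rw [hdiff, hsymm, htr, sum_filter]
  refine sum_congr rfl fun k _ => ?_
  by_cases hk : (k : ℕ) < r <;> simp [f, hk]

end Matrix

theorem stmt_1_general {n m r : ℕ} (hrm : r ≤ m)
    (C : Matrix (Fin n) (Fin m) ℝ) (W : Matrix (Fin m) (Fin m) ℝ)
    -- thin QR decomposition C = Q R
    (Q : Matrix (Fin n) (Fin m) ℝ) (R : Matrix (Fin m) (Fin m) ℝ)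
    (hQR : C = Q * R) (hQ : Qᵀ * Q = 1)
    -- spectral decomposition R W⁻¹ Rᵀ = V' Σ' V'ᵀ
    (V' : Matrix (Fin m) (Fin m) ℝ) (d : Fin m → ℝ)
    (hV' : V'ᵀ * V' = 1) (hd : ∀ i, 0 ≤ d i) (hmono : Antitone d)
    (hspec : R * W⁻¹ * Rᵀ = V' * Matrix.diagonal d * V'ᵀ) :
    ((Q * V')ᵀ * (Q * V') = 1) ∧
    (C * W⁻¹ * Cᵀ = (Q * V') * Matrix.diagonal d * (Q * V')ᵀ) ∧
    (∀ G' : Matrix (Fin n) (Fin n) ℝ, G'.rank ≤ r →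
      frobNorm (C * W⁻¹ * Cᵀ -
          (Q * V'.submatrix id (Fin.castLE hrm)) *
            Matrix.diagonal (fun i : Fin r => d (Fin.castLE hrm i)) *
          (Q * V'.submatrix id (Fin.castLE hrm))ᵀ)
        ≤ frobNorm (C * W⁻¹ * Cᵀ - G')) := by
  set U := Q * V'
  have hU : Uᵀ * U = 1 := transpose_mul_self_mul_eq_one hQ hV'
  have hCW : C * W⁻¹ * Cᵀ = U * diagonal d * Uᵀ := by
    rw [hQR, transpose_mul]
    calc Q * R * W⁻¹ * (Rᵀ * Qᵀ) = Q * (R * W⁻¹ * Rᵀ) * Qᵀ := by simp only [Matrix.mul_assoc]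
      _ = U * diagonal d * Uᵀ := by rw [hspec, transpose_mul]; simp only [U, Matrix.mul_assoc]
  refine ⟨hU, hCW, fun G hG => ?_⟩
  have hsub : Q * V'.submatrix id (Fin.castLE hrm) = U.submatrix id (Fin.castLE hrm) := by
    rw [submatrix_mul _ _ id id _ Function.bijective_id, submatrix_id_id]
  rw [hCW, hsub, submatrix_castLE_mul_diagonal_mul_transpose, frobNorm, frobNorm,
    trace_transpose_mul_self_sub_truncation hU]
  exact Real.sqrt_le_sqrt (sum_tail_sq_le_trace_of_rank_le hrm hU hd hmono hG)

theorem stmt_1 {n m r : ℕ} (hmn : m ≤ n) (hr : 0 < r) (hrm : r ≤ m)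
    (C : Matrix (Fin n) (Fin m) ℝ) (W : Matrix (Fin m) (Fin m) ℝ)
    (hW : W.PosDef)
    -- thin QR decomposition C = Q R
    (Q : Matrix (Fin n) (Fin m) ℝ) (R : Matrix (Fin m) (Fin m) ℝ)
    (hQR : C = Q * R) (hQ : Qᵀ * Q = 1) (hR : R.BlockTriangular id)
    -- spectral decomposition R W⁻¹ Rᵀ = V' Σ' V'ᵀ
    (V' : Matrix (Fin m) (Fin m) ℝ) (d : Fin m → ℝ)
    (hV' : V'ᵀ * V' = 1) (hd : ∀ i, 0 ≤ d i) (hmono : Antitone d)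
    (hspec : R * W⁻¹ * Rᵀ = V' * Matrix.diagonal d * V'ᵀ) :
    ((Q * V')ᵀ * (Q * V') = 1) ∧
    (C * W⁻¹ * Cᵀ = (Q * V') * Matrix.diagonal d * (Q * V')ᵀ) ∧
    (∀ G' : Matrix (Fin n) (Fin n) ℝ, G'.rank ≤ r →
      frobNorm (C * W⁻¹ * Cᵀ -
          (Q * V'.submatrix id (Fin.castLE hrm)) *
            Matrix.diagonal (fun i : Fin r => d (Fin.castLE hrm i)) *
          (Q * V'.submatrix id (Fin.castLE hrm))ᵀ)
        ≤ frobNorm (C * W⁻¹ * Cᵀ - G')) :=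
  stmt_1_general hrm C W Q R hQR hQ V' d hV' hd hmono hspec
end

section
/- Let K be a real n×n positive semidefinite matrix with positive semidefinite square root K^{1/2}, let P be a real n×m matrix, and set C = KP and W = PᵀKP; assume W is invertible. Let K^{1/2}P = F S Nᵀ be a singular value decomposition, where F is n×m with orthonormal columns, N is m×m orthogonal, and S is m×m diagonal with positive diagonal entries. Then W = N S² Nᵀ and C W⁻¹ Cᵀ = K^{1/2} F Fᵀ K^{1/2}; consequently K − C W⁻¹ Cᵀ = K^{1/2}(I_n − FFᵀ)K^{1/2} is positive semidefinite. -/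
/-!
Put `Q = K^{1/2}` and `A = Q P = F S Nᵀ`. Then `W = Aᵀ A = N S² Nᵀ` and `C = Q A`, so
`C W⁻¹ Cᵀ = Q (A (Aᵀ A)⁻¹ Aᵀ) Q`, and the middle factor collapses to `F Fᵀ`, the orthogonal
projection onto the column space of `A`. Its complement `1 - F Fᵀ` is again an orthogonal
projection, hence positive semidefinite, and so is its congruence by the symmetric matrix `Q`.
-/

open Matrix

/-- The square root of a positive semidefinite matrix, as defined in the older Mathlib
(removed since). -/
noncomputable def Matrix.PosSemidef.sqrt {n : Type*} [Fintype n] [DecidableEq n]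
    {A : Matrix n n ℝ} (hA : A.PosSemidef) : Matrix n n ℝ :=
  hA.1.eigenvectorUnitary.1 * diagonal ((↑) ∘ (fun x => Real.sqrt x) ∘ hA.1.eigenvalues) *
    (star hA.1.eigenvectorUnitary : Matrix n n ℝ)

namespace Matrix

variable {ι κ : Type*} [Fintype ι] [Fintype κ] [DecidableEq κ]

namespace PosSemidef

variable [DecidableEq ι] {A : Matrix ι ι ℝ} (hA : A.PosSemidef)

theorem transpose_sqrt : hA.sqrtᵀ = hA.sqrt := by
  simp [sqrt, transpose_mul, Matrix.mul_assoc, star_eq_conjTranspose,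
    conjTranspose_eq_transpose_of_trivial]

theorem sqrt_mul_self : hA.sqrt * hA.sqrt = A := by
  have hU : star (hA.1.eigenvectorUnitary : Matrix ι ι ℝ) * hA.1.eigenvectorUnitary = 1 :=
    Unitary.star_mul_self_of_mem hA.1.eigenvectorUnitary.2
  conv_rhs => rw [hA.1.spectral_theorem, Unitary.conjStarAlgAut_apply]
  simp only [sqrt, Matrix.mul_assoc]
  rw [← Matrix.mul_assoc _ hA.1.eigenvectorUnitary.1, hU, Matrix.one_mul,
    ← Matrix.mul_assoc (diagonal _), diagonal_mul_diagonal]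
  congr 3
  funext i
  simp [Real.mul_self_sqrt (hA.eigenvalues_nonneg i)]

end PosSemidef

section Orthogonal

variable {R : Type*} [CommRing R] {N : Matrix κ κ R}

theorem conj_diagonal_mul_conj_diagonal (hN : Nᵀ * N = 1) (d e : κ → R) :
    N * diagonal d * Nᵀ * (N * diagonal e * Nᵀ) = N * diagonal (d * e) * Nᵀ := by
  rw [show diagonal (d * e) = diagonal d * diagonal e from (diagonal_mul_diagonal d e).symm]
  simp only [Matrix.mul_assoc]
  rw [← Matrix.mul_assoc Nᵀ, hN, Matrix.one_mul]

theorem inv_conj_diagonal {K : Type*} [Field K] {N : Matrix κ κ K} (hN : Nᵀ * N = 1)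
    {d : κ → K} (hd : ∀ i, d i ≠ 0) :
    (N * diagonal d * Nᵀ)⁻¹ = N * diagonal d⁻¹ * Nᵀ := by
  refine inv_eq_right_inv ?_
  have hdd : d * d⁻¹ = fun _ => 1 := funext fun i => mul_inv_cancel₀ (hd i)
  rw [conj_diagonal_mul_conj_diagonal hN, hdd, diagonal_one, Matrix.mul_one]
  exact mul_eq_one_comm.mp hN

end Orthogonal

section SingularValueDecomposition

theorem transpose_mul_self_of_svd {R : Type*} [CommRing R] {F : Matrix ι κ R}
    {N : Matrix κ κ R} {s : κ → R} (hF : Fᵀ * F = 1) :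
    (F * diagonal s * Nᵀ)ᵀ * (F * diagonal s * Nᵀ) = N * diagonal (fun i => s i ^ 2) * Nᵀ := by
  simp only [transpose_mul, transpose_transpose, diagonal_transpose, Matrix.mul_assoc]
  rw [← Matrix.mul_assoc Fᵀ, hF, Matrix.one_mul, ← Matrix.mul_assoc (diagonal s),
    diagonal_mul_diagonal]
  simp only [sq]

variable {K : Type*} [Field K] {F : Matrix ι κ K} {N : Matrix κ κ K} {s : κ → K}

theorem mul_inv_transpose_mul_self_mul_transpose_of_svd {A : Matrix ι κ K}
    (hA : A = F * diagonal s * Nᵀ) (hF : Fᵀ * F = 1) (hN : Nᵀ * N = 1) (hs : ∀ i, s i ≠ 0) :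
    A * (Aᵀ * A)⁻¹ * Aᵀ = F * Fᵀ := by
  have hss : (fun i => s i * ((s i ^ 2)⁻¹ * s i)) = fun _ => 1 := by
    funext i
    field_simp [hs i]
  subst hA
  rw [transpose_mul_self_of_svd hF, inv_conj_diagonal hN fun i => pow_ne_zero 2 (hs i)]
  simp only [transpose_mul, transpose_transpose, diagonal_transpose, Matrix.mul_assoc]
  rw [← Matrix.mul_assoc Nᵀ N, hN, Matrix.one_mul, ← Matrix.mul_assoc Nᵀ N, hN, Matrix.one_mul,
    ← Matrix.mul_assoc (diagonal _) (diagonal s), diagonal_mul_diagonal,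
    ← Matrix.mul_assoc (diagonal s), diagonal_mul_diagonal]
  simp only [Pi.inv_apply, hss, diagonal_one, Matrix.one_mul]

end SingularValueDecomposition

open scoped ComplexOrder in
theorem posSemidef_one_sub_mul_conjTranspose [DecidableEq ι] {𝕜 : Type*} [RCLike 𝕜]
    {F : Matrix ι κ 𝕜} (hF : Fᴴ * F = 1) : (1 - F * Fᴴ).PosSemidef := by
  have hidem : (1 - F * Fᴴ) * (1 - F * Fᴴ)ᴴ = 1 - F * Fᴴ := by
    have hFF : F * Fᴴ * (F * Fᴴ) = F * Fᴴ := by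
      rw [Matrix.mul_assoc, ← Matrix.mul_assoc Fᴴ, hF, Matrix.one_mul]
    simp only [conjTranspose_sub, conjTranspose_one, conjTranspose_mul,
      conjTranspose_conjTranspose]
    noncomm_ring [hFF]
  rw [← hidem]
  exact posSemidef_self_mul_conjTranspose _

end Matrix

theorem stmt_3_general {n m : ℕ} (K : Matrix (Fin n) (Fin n) ℝ) (hK : K.PosSemidef)
    (P : Matrix (Fin n) (Fin m) ℝ)
    (C : Matrix (Fin n) (Fin m) ℝ) (W : Matrix (Fin m) (Fin m) ℝ)
    (hC : C = K * P) (hW : W = Pᵀ * K * P)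
    -- singular value decomposition K^{1/2} P = F S Nᵀ
    (F : Matrix (Fin n) (Fin m) ℝ) (N : Matrix (Fin m) (Fin m) ℝ) (s : Fin m → ℝ)
    (hF : Fᵀ * F = 1) (hN : Nᵀ * N = 1) (hs : ∀ i, 0 < s i)
    (hSVD : hK.sqrt * P = F * Matrix.diagonal s * Nᵀ) :
    W = N * Matrix.diagonal (fun i => s i ^ 2) * Nᵀ ∧
    C * W⁻¹ * Cᵀ = hK.sqrt * F * Fᵀ * hK.sqrt ∧
    K - C * W⁻¹ * Cᵀ = hK.sqrt * (1 - F * Fᵀ) * hK.sqrt ∧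
    (K - C * W⁻¹ * Cᵀ).PosSemidef := by
  have hQQ := hK.sqrt_mul_self
  have hQT := hK.transpose_sqrt
  set Q := hK.sqrt
  have hW' : W = (Q * P)ᵀ * (Q * P) := by
    rw [hW, transpose_mul, hQT, ← hQQ]
    simp only [Matrix.mul_assoc]
  have hC' : C = Q * (Q * P) := by rw [hC, ← hQQ, Matrix.mul_assoc]
  have hCWC : C * W⁻¹ * Cᵀ = Q * F * Fᵀ * Q := by
    rw [Matrix.mul_assoc Q F,
      ← mul_inv_transpose_mul_self_mul_transpose_of_svd hSVD hF hN fun i => (hs i).ne', hC', hW']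
    simp only [transpose_mul, hQT, Matrix.mul_assoc]
  have hdiff : K - C * W⁻¹ * Cᵀ = Q * (1 - F * Fᵀ) * Q := by
    rw [hCWC, ← hQQ]
    simp only [Matrix.mul_sub, Matrix.sub_mul, Matrix.mul_one, Matrix.mul_assoc]
  refine ⟨by rw [hW', hSVD, transpose_mul_self_of_svd hF], hCWC, hdiff, ?_⟩
  have hQH : Qᴴ = Q := hQT
  have hcompl : (1 - F * Fᵀ).PosSemidef := posSemidef_one_sub_mul_conjTranspose (F := F) hF
  simpa only [hdiff, hQH] using hcompl.mul_mul_conjTranspose_same Q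

theorem stmt_3 {n m : ℕ} (K : Matrix (Fin n) (Fin n) ℝ) (hK : K.PosSemidef)
    (P : Matrix (Fin n) (Fin m) ℝ)
    (C : Matrix (Fin n) (Fin m) ℝ) (W : Matrix (Fin m) (Fin m) ℝ)
    (hC : C = K * P) (hW : W = Pᵀ * K * P) (hWinv : IsUnit W)
    -- singular value decomposition K^{1/2} P = F S Nᵀ
    (F : Matrix (Fin n) (Fin m) ℝ) (N : Matrix (Fin m) (Fin m) ℝ) (s : Fin m → ℝ)
    (hF : Fᵀ * F = 1) (hN : Nᵀ * N = 1) (hs : ∀ i, 0 < s i)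
    (hSVD : hK.sqrt * P = F * Matrix.diagonal s * Nᵀ) :
    W = N * Matrix.diagonal (fun i => s i ^ 2) * Nᵀ ∧
    C * W⁻¹ * Cᵀ = hK.sqrt * F * Fᵀ * hK.sqrt ∧
    K - C * W⁻¹ * Cᵀ = hK.sqrt * (1 - F * Fᵀ) * hK.sqrt ∧
    (K - C * W⁻¹ * Cᵀ).PosSemidef :=
  stmt_3_general K hK P C W hC hW F N s hF hN hs hSVD
end

section
/- Let A be a real n×n matrix, let F be a real n×m₁ matrix with orthonormal columns and F̃ a real n×m₂ matrix with orthonormal columns such that the column space of F is contained in the column space of F̃, and let r be a positive integer with r ≤ m₁. Then for every real m₁×n matrix T with rank(T) ≤ r there exists a real m₂×n matrix T̃ with rank(T̃) ≤ r such that ‖A − F̃T̃‖_F ≤ ‖A − FT‖_F; consequently the infimum of ‖A − F̃T̃‖_F² over rank-≤r matrices T̃ is at most the infimum of ‖A − FT‖_F² over rank-≤r matrices T. -/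
/-!
Since the columns of `F` lie in the column space of `F̃` and `F̃ᵀ F̃ = 1`, the orthogonal projection
`F̃ F̃ᵀ` fixes `F`. Hence `T̃ := F̃ᵀ F T` has rank at most `rank T` and `F̃ T̃ = F T`: every
approximation available with `F` is available with `F̃`, with the same error.
-/

open Matrix

namespace Matrix

variable {R m n k l : Type*} [Fintype n] [Fintype k]

theorem exists_eq_mul_of_range_mulVecLin_le [CommSemiring R] [DecidableEq k]
    {F : Matrix m k R} {B : Matrix m n R}
    (h : LinearMap.range F.mulVecLin ≤ LinearMap.range B.mulVecLin) :
    ∃ G : Matrix n k R, F = B * G := by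
  have hcol : ∀ j, ∃ w, B *ᵥ w = F.col j := fun j => by
    simpa [mulVec_single_one] using h ⟨Pi.single j 1, rfl⟩
  choose w hw using hcol
  exact ⟨(of w)ᵀ, ext fun i j => by
    simpa [mulVec, dotProduct, mul_apply] using (congrFun (hw j) i).symm⟩

theorem mul_transpose_mul_eq_of_range_mulVecLin_le [CommSemiring R] [Fintype m] [DecidableEq k]
    [DecidableEq n] {F : Matrix m k R} {Q : Matrix m n R} (hQ : Qᵀ * Q = 1)
    (h : LinearMap.range F.mulVecLin ≤ LinearMap.range Q.mulVecLin) :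
    Q * (Qᵀ * F) = F := by
  obtain ⟨G, rfl⟩ := exists_eq_mul_of_range_mulVecLin_le h
  rw [← Matrix.mul_assoc Qᵀ, hQ, Matrix.one_mul]

theorem exists_rank_le_mul_eq_of_range_mulVecLin_le [Field R] [Fintype m] [Fintype l]
    [DecidableEq k] [DecidableEq n] {F : Matrix m k R} {Q : Matrix m n R} (hQ : Qᵀ * Q = 1)
    (h : LinearMap.range F.mulVecLin ≤ LinearMap.range Q.mulVecLin) (T : Matrix k l R) :
    ∃ T' : Matrix n l R, T'.rank ≤ T.rank ∧ Q * T' = F * T :=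
  ⟨Qᵀ * F * T, rank_mul_le_right _ _, by
    rw [← Matrix.mul_assoc, mul_transpose_mul_eq_of_range_mulVecLin_le hQ h]⟩

end Matrix

theorem stmt_8_general {n m₁ m₂ r : ℕ}
    (A : Matrix (Fin n) (Fin n) ℝ)
    (F : Matrix (Fin n) (Fin m₁) ℝ) (Ft : Matrix (Fin n) (Fin m₂) ℝ)
    (hFt : Ftᵀ * Ft = 1)
    -- column space of F is contained in the column space of F̃
    (hrange : LinearMap.range F.mulVecLin ≤ LinearMap.range Ft.mulVecLin) :
    (∀ T : Matrix (Fin m₁) (Fin n) ℝ, T.rank ≤ r →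
      ∃ Tt : Matrix (Fin m₂) (Fin n) ℝ, Tt.rank ≤ r ∧
        frobNorm (A - Ft * Tt) ≤ frobNorm (A - F * T)) ∧
    sInf {x : ℝ | ∃ Tt : Matrix (Fin m₂) (Fin n) ℝ, Tt.rank ≤ r ∧
        x = frobNorm (A - Ft * Tt) ^ 2} ≤
      sInf {x : ℝ | ∃ T : Matrix (Fin m₁) (Fin n) ℝ, T.rank ≤ r ∧
        x = frobNorm (A - F * T) ^ 2} := by
  have lift (T : Matrix (Fin m₁) (Fin n) ℝ) (hT : T.rank ≤ r) :
      ∃ Tt : Matrix (Fin m₂) (Fin n) ℝ, Tt.rank ≤ r ∧ Ft * Tt = F * T := by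
    obtain ⟨Tt, hrank, hmul⟩ := exists_rank_le_mul_eq_of_range_mulVecLin_le hFt hrange T
    exact ⟨Tt, hrank.trans hT, hmul⟩
  refine ⟨fun T hT => ?_, csInf_le_csInf ⟨0, ?_⟩ ⟨_, 0, by simp, rfl⟩ ?_⟩
  · obtain ⟨Tt, hrank, hmul⟩ := lift T hT
    exact ⟨Tt, hrank, by rw [hmul]⟩
  · rintro _ ⟨Tt, -, rfl⟩
    positivity
  · rintro _ ⟨T, hT, rfl⟩
    obtain ⟨Tt, hrank, hmul⟩ := lift T hT
    exact ⟨Tt, hrank, by rw [hmul]⟩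

theorem stmt_8 {n m₁ m₂ r : ℕ} (hr : 0 < r) (hrm : r ≤ m₁)
    (A : Matrix (Fin n) (Fin n) ℝ)
    (F : Matrix (Fin n) (Fin m₁) ℝ) (Ft : Matrix (Fin n) (Fin m₂) ℝ)
    (hF : Fᵀ * F = 1) (hFt : Ftᵀ * Ft = 1)
    -- column space of F is contained in the column space of F̃
    (hrange : LinearMap.range F.mulVecLin ≤ LinearMap.range Ft.mulVecLin) :
    (∀ T : Matrix (Fin m₁) (Fin n) ℝ, T.rank ≤ r →
      ∃ Tt : Matrix (Fin m₂) (Fin n) ℝ, Tt.rank ≤ r ∧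
        frobNorm (A - Ft * Tt) ≤ frobNorm (A - F * T)) ∧
    sInf {x : ℝ | ∃ Tt : Matrix (Fin m₂) (Fin n) ℝ, Tt.rank ≤ r ∧
        x = frobNorm (A - Ft * Tt) ^ 2} ≤
      sInf {x : ℝ | ∃ T : Matrix (Fin m₁) (Fin n) ℝ, T.rank ≤ r ∧
        x = frobNorm (A - F * T) ^ 2} :=
  stmt_8_general A F Ft hFt hrange
end

section
/- (Remark: non-monotonicity of standard Nyström.) Let K be the 3×3 symmetric matrix with rows (1, 0, 10), (0, 1.01, 0), (10, 0, 100). Then K is positive semidefinite. For r = 1: (i) using only the first column, with C₁ = (1, 0, 10)ᵀ and W₁ = [1], the standard Nyström rank-1 approximation is G₁ = C₁ C₁ᵀ, and it satisfies trace(K − G₁) = 1.01 and ‖K − G₁‖_F = 1.01; (ii) using the first two columns, with C₂ the 3×2 matrix of the first two columns of K and W₂ = diag(1, 1.01), the standard Nyström rank-1 approximation is G₂ = C₂ M C₂ᵀ with M = diag(0, 1/1.01) (the pseudo-inverse of the best rank-1 approximation of W₂), and K − G₂ is positive semidefinite with trace(K − G₂) = 101 and ‖K − G₂‖_F > 100.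 Hence trace(K − G₂) > trace(K − G₁) and ‖K − G₂‖_F > ‖K − G₁‖_F: adding a landmark point strictly worsens the standard Nyström rank-1 approximation in both trace and Frobenius norms. -/
open Matrix

/-- The 3×3 kernel matrix of the non-monotonicity example. -/
def K11 : Matrix (Fin 3) (Fin 3) ℝ :=
  !![1, 0, 10;
     0, 1.01, 0;
     10, 0, 100]

/-- The first column of K. -/
def C1 : Matrix (Fin 3) (Fin 1) ℝ := !![1; 0; 10]

/-- The first two columns of K. -/
def C2 : Matrix (Fin 3) (Fin 2) ℝ :=
  !![1, 0;
     0, 1.01;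
     10, 0]

/-- The pseudo-inverse of the best rank-1 approximation of W₂ = diag(1, 1.01). -/
noncomputable def M11 : Matrix (Fin 2) (Fin 2) ℝ := !![0, 0; 0, (1.01 : ℝ)⁻¹]

/-!
The first column `u = (1, 0, 10)` of `K` splits it as `K = u uᵀ + diag(0, 1.01, 0)`. The
one-landmark approximation is exactly `u uᵀ`, leaving the small diagonal piece. With two
landmarks, the rank-1 truncation of `W₂ = diag(1, 1.01)` keeps the eigenvalue `1.01` of the second
landmark, so the approximation is the diagonal piece and the residual is `u uᵀ`, whose trace and
Frobenius norm are both `‖u‖² = 101`.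
-/

section FrobNorm

variable {n : Type*} [Fintype n]

lemma frobNorm_vecMulVec_self (u : n → ℝ) : frobNorm (vecMulVec u u) = u ⬝ᵥ u := by
  rw [frobNorm, transpose_vecMulVec, vecMulVec_mul_vecMulVec, trace_vecMulVec, dotProduct_smul,
    smul_eq_mul, ← sq, Real.sqrt_sq (by simpa using dotProduct_self_star_nonneg u)]

lemma frobNorm_diagonal [DecidableEq n] (d : n → ℝ) :
    frobNorm (diagonal d) = √(∑ i, d i ^ 2) := by
  simp only [frobNorm, diagonal_transpose, diagonal_mul_diagonal, trace_diagonal, sq]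

end FrobNorm

def u11 : Fin 3 → ℝ := ![1, 0, 10]

def d11 : Fin 3 → ℝ := ![0, 1.01, 0]

lemma K11_eq_vecMulVec_add_diagonal : K11 = vecMulVec u11 u11 + diagonal d11 := by
  ext i j
  fin_cases i <;> fin_cases j <;> norm_num [K11, u11, d11, vecMulVec_apply]

lemma C1_mul_transpose : C1 * C1ᵀ = vecMulVec u11 u11 := by
  ext i j
  fin_cases i <;> fin_cases j <;> norm_num [C1, u11, mul_apply, vecMulVec_apply]

lemma C2_mul_M11_mul_transpose : C2 * M11 * C2ᵀ = diagonal d11 := by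
  ext i j
  fin_cases i <;> fin_cases j <;> norm_num [C2, M11, d11, mul_apply, Fin.sum_univ_succ]

lemma K11_sub_C1_mul_transpose : K11 - C1 * C1ᵀ = diagonal d11 := by
  rw [K11_eq_vecMulVec_add_diagonal, C1_mul_transpose, add_sub_cancel_left]

lemma K11_sub_C2_mul_M11_mul_transpose : K11 - C2 * M11 * C2ᵀ = vecMulVec u11 u11 := by
  rw [K11_eq_vecMulVec_add_diagonal, C2_mul_M11_mul_transpose, add_sub_cancel_right]

lemma u11_dotProduct_self : u11 ⬝ᵥ u11 = 101 := by
  norm_num [u11, dotProduct, Fin.sum_univ_succ]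

lemma trace_diagonal_d11 : trace (diagonal d11) = 1.01 := by
  norm_num [d11, Fin.sum_univ_succ]

lemma frobNorm_diagonal_d11 : frobNorm (diagonal d11) = 1.01 := by
  rw [frobNorm_diagonal, show ∑ i, d11 i ^ 2 = 1.01 ^ 2 by norm_num [d11, Fin.sum_univ_succ],
    Real.sqrt_sq (by norm_num)]

/-- Non-monotonicity of the standard Nyström method: adding a landmark point strictly worsens
the rank-1 approximation in both trace and Frobenius norms. -/
theorem stmt_11 :
    K11.PosSemidef ∧
    Matrix.trace (K11 - C1 * C1ᵀ) = 1.01 ∧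
    frobNorm (K11 - C1 * C1ᵀ) = 1.01 ∧
    (K11 - C2 * M11 * C2ᵀ).PosSemidef ∧
    Matrix.trace (K11 - C2 * M11 * C2ᵀ) = 101 ∧
    frobNorm (K11 - C2 * M11 * C2ᵀ) > 100 ∧
    Matrix.trace (K11 - C2 * M11 * C2ᵀ) > Matrix.trace (K11 - C1 * C1ᵀ) ∧
    frobNorm (K11 - C2 * M11 * C2ᵀ) > frobNorm (K11 - C1 * C1ᵀ) := by
  have hu : (vecMulVec u11 u11).PosSemidef := posSemidef_vecMulVec_self_star u11
  have hd : (diagonal d11).PosSemidef :=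
    PosSemidef.diagonal fun i => by fin_cases i <;> norm_num [d11]
  rw [K11_sub_C1_mul_transpose, K11_sub_C2_mul_M11_mul_transpose, trace_diagonal_d11,
    frobNorm_diagonal_d11, trace_vecMulVec, frobNorm_vecMulVec_self, u11_dotProduct_self,
    K11_eq_vecMulVec_add_diagonal]
  exact ⟨hu.add hd, rfl, rfl, hu, rfl, by norm_num, by norm_num, by norm_num⟩
end
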